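/- The theta subgroup Γ_θ of SL₂(ℤ) is generated by the two elements S = (0 −1; 1 0) and T² = (1 2; 0 1). -/

import Mathlib

/-!
Both `S` and `T²` lie in `Γ_θ`, so `⟨S, T²⟩ ≤ Γ_θ`. Conversely, left multiplication by the
generators `S`, `T` of `SL₂(ℤ)` permutes the three left cosets of `H = ⟨S, T²⟩` represented by
`1`, `T` and `ST`, so these cosets cover `SL₂(ℤ)`. As `T` and `ST` lie outside `Γ_θ ⊇ H`, no
element of `Γ_θ` lies in the cosets `TH` or `STH`, hence `Γ_θ ≤ H`.
-/

open Matrix Matrix.SpecialLinearGroup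

/-- The theta subgroup `Γ_θ` of matrices congruent to the identity or to
`(0 1; 1 0)` modulo `2`. -/
def GammaTheta : Subgroup (Matrix.SpecialLinearGroup (Fin 2) ℤ) where
  carrier := { g |
    (((g.1 0 0 : ℤ) : ZMod 2) = 1 ∧ ((g.1 0 1 : ℤ) : ZMod 2) = 0 ∧
      ((g.1 1 0 : ℤ) : ZMod 2) = 0 ∧ ((g.1 1 1 : ℤ) : ZMod 2) = 1) ∨
    (((g.1 0 0 : ℤ) : ZMod 2) = 0 ∧ ((g.1 0 1 : ℤ) : ZMod 2) = 1 ∧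
      ((g.1 1 0 : ℤ) : ZMod 2) = 1 ∧ ((g.1 1 1 : ℤ) : ZMod 2) = 0) }
  one_mem' := by left; simp
  mul_mem' := by
    intro a b ha hb
    have h := Matrix.two_mul_expl a.1 b.1
    simp only [Set.mem_setOf_eq, Matrix.SpecialLinearGroup.coe_mul] at *
    rw [h.1, h.2.1, h.2.2.1, h.2.2.2]
    push_cast
    rcases ha with ⟨h1, h2, h3, h4⟩ | ⟨h1, h2, h3, h4⟩ <;>
      rcases hb with ⟨g1, g2, g3, g4⟩ | ⟨g1, g2, g3, g4⟩ <;>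
        simp [h1, h2, h3, h4, g1, g2, g3, g4]
  inv_mem' := by
    intro a ha
    simp only [Set.mem_setOf_eq] at *
    rw [SL2_inv_expl a]
    simp only [Matrix.cons_val_zero, Matrix.cons_val_one, Matrix.head_cons,
      Matrix.cons_val_fin_one, Matrix.head_fin_const]
    push_cast
    rcases ha with ⟨h1, h2, h3, h4⟩ | ⟨h1, h2, h3, h4⟩
    · left; simp [h1, h2, h3, h4]
    · right; simp [h1, h2, h3, h4] <;> decide

open Pointwise in
theorem MulAction.orbit_subset_of_smul_subset {G α : Type*} [Group G] [MulAction G α]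
    {s : Set G} (hs : Subgroup.closure s = ⊤) {Q : Set α} (hQ : Q.Finite) {a : α} (ha : a ∈ Q)
    (hsQ : ∀ x ∈ s, x • Q ⊆ Q) : orbit G a ⊆ Q := by
  have hstab : Subgroup.closure s ≤ stabilizer G Q :=
    (Subgroup.closure_le _).2 fun x hx => (mem_stabilizer_set_iff_smul_set_subset hQ).2 (hsQ x hx)
  rintro _ ⟨g, rfl⟩
  have hg : g • Q = Q := hstab (hs ▸ Subgroup.mem_top g)
  exact hg ▸ Set.smul_mem_smul_set ha

theorem QuotientGroup.mem_of_mk_eq {G : Type*} [Group G] {H K : Subgroup G} (hHK : H ≤ K)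
    {g x : G} (hxg : (x : G ⧸ H) = g) (hg : g ∈ K) : x ∈ K := by
  simpa using K.mul_mem hg (K.inv_mem (hHK (QuotientGroup.eq.1 hxg)))

open ModularGroup MatrixGroups

lemma S_mem_GammaTheta : S ∈ GammaTheta := by right; decide

lemma T_sq_mem_GammaTheta : T ^ 2 ∈ GammaTheta := by left; decide

lemma T_notMem_GammaTheta : T ∉ GammaTheta := by rintro (h | h) <;> revert h <;> decide

lemma S_mul_T_notMem_GammaTheta : S * T ∉ GammaTheta := by
  rintro (h | h) <;> revert h <;> decide

lemma closure_S_T_sq_le_GammaTheta : Subgroup.closure {S, T ^ 2} ≤ GammaTheta :=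
  (Subgroup.closure_le _).2 <| Set.insert_subset S_mem_GammaTheta <|
    Set.singleton_subset_iff.2 T_sq_mem_GammaTheta

open Pointwise in
lemma mk_mem_image_one_T_S_mul_T (g : SL(2, ℤ)) :
    (g : SL(2, ℤ) ⧸ Subgroup.closure {S, T ^ 2}) ∈ QuotientGroup.mk '' {1, T, S * T} := by
  set H := Subgroup.closure {S, T ^ 2}
  have hS : S ∈ H := Subgroup.subset_closure (by simp)
  have hT2 : T ^ 2 ∈ H := Subgroup.subset_closure (by simp)
  refine MulAction.orbit_subset_of_smul_subset (a := ((1 : SL(2, ℤ)) : SL(2, ℤ) ⧸ H))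
    SpecialLinearGroup.SL2Z_generators (Set.toFinite _)
    (Set.mem_image_of_mem _ (Set.mem_insert _ _)) ?_
    (by simpa using MulAction.mem_orbit ((1 : SL(2, ℤ)) : SL(2, ℤ) ⧸ H) g)
  rintro x (rfl | rfl) <;>
    simp only [Set.image_insert_eq, Set.image_singleton, Set.smul_set_insert,
      Set.smul_set_singleton, MulAction.Quotient.smul_mk, smul_eq_mul, mul_one,
      Set.insert_subset_iff, Set.singleton_subset_iff, Set.mem_insert_iff, Set.mem_singleton_iff,
      QuotientGroup.eq, or_true, true_or, true_and]
  · refine ⟨.inl (H.inv_mem hS), .inr (.inl ?_)⟩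
    rw [show (S * (S * T))⁻¹ * T = S * S by decide]
    exact H.mul_mem hS hS
  · refine ⟨.inl ?_, .inr (.inr ?_)⟩
    · rw [← sq]
      exact H.inv_mem hT2
    · rw [show (T * (S * T))⁻¹ * (S * T) = S * T ^ 2 by decide]
      exact H.mul_mem hS hT2

/-- `Γ_θ` is generated by `S = (0 -1; 1 0)` and `T² = (1 2; 0 1)`. -/
theorem stmt19 :
    Subgroup.closure {ModularGroup.S, ModularGroup.T ^ 2} = GammaTheta := by
  refine le_antisymm closure_S_T_sq_le_GammaTheta fun g hg => ?_
  obtain ⟨r, hr, h⟩ := mk_mem_image_one_T_S_mul_T g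
  rcases hr with rfl | rfl | rfl
  · simpa using QuotientGroup.eq.1 h
  · exact absurd (QuotientGroup.mem_of_mk_eq closure_S_T_sq_le_GammaTheta h hg)
      T_notMem_GammaTheta
  · exact absurd (QuotientGroup.mem_of_mk_eq closure_S_T_sq_le_GammaTheta h hg)
      S_mul_T_notMem_GammaTheta
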